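/- Head variable property: if t is a normal simply typed λ-term with x₁:A₁,…,xₙ:Aₙ, z:B ⊢ t : A, then either every occurrence of z in t is applied to some argument or projection (i.e., occurs as z ξ), or B = ⊥, or B is a subformula of A, or B is a proper subformula of one of A₁,…,Aₙ. -/
import Mathlib


/-- Formulas built from atoms, ⊥, ∧ and →. -/
inductive Form where
  | atom : ℕ → Form
  | bot  : Form
  | conj : Form → Form → Form
  | imp  : Form → Form → Form
deriving DecidableEq

/-- The subformula relation. -/
inductive Subform : Form → Form → Prop
  | refl (A) : Subform A A
  | conjL : Subform B A₁ → Subform B (Form.conj A₁ A₂)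
  | conjR : Subform B A₂ → Subform B (Form.conj A₁ A₂)
  | impL : Subform B A₁ → Subform B (Form.imp A₁ A₂)
  | impR : Subform B A₂ → Subform B (Form.imp A₁ A₂)

/-- Proper subformula: a subformula distinct from the whole formula. -/
def ProperSub (B A : Form) : Prop := Subform B A ∧ B ≠ A

/-- A formula is prime if it is not a conjunction. -/
def PrimeForm (A : Form) : Prop := ∀ X Y, A ≠ Form.conj X Y

/-- The prime factors of a formula: split top-level conjunctions recursively. -/
def primeFactors : Form → List Form
  | Form.conj A B => primeFactors A ++ primeFactors B
  | A => [A]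

/-- B is a strong subformula of A if B is a proper subformula of some prime
proper subformula of A. -/
def StrongSub (B A : Form) : Prop :=
  ∃ C, PrimeForm C ∧ ProperSub C A ∧ ProperSub B C

/-- Simply typed λ-terms with named variables: variables, λ-abstraction,
application, pairing, projections, and ex falso (targeting atomic types). -/
inductive Tm where
  | var : ℕ → Tm
  | lam : ℕ → Form → Tm → Tm
  | app : Tm → Tm → Tm
  | pair : Tm → Tm → Tm
  | proj : Bool → Tm → Tm
  | efq : ℕ → Tm → Tm
deriving DecidableEq

/-- Free variables of a term. -/
def FV : Tm → Set ℕ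
  | .var x => {x}
  | .lam x _ u => FV u \ {x}
  | .app u w => FV u ∪ FV w
  | .pair u v => FV u ∪ FV v
  | .proj _ u => FV u
  | .efq _ u => FV u

def upd (Γ : ℕ → Option Form) (x : ℕ) (A : Form) : ℕ → Option Form :=
  fun y => if y = x then some A else Γ y

/-- Typing judgment for the simply typed λ-calculus. -/
inductive Typed : (ℕ → Option Form) → Tm → Form → Prop
  | var : Γ x = some A → Typed Γ (.var x) A
  | lam : Typed (upd Γ x A) u B → Typed Γ (.lam x A u) (.imp A B)
  | app : Typed Γ u (.imp A B) → Typed Γ w A → Typed Γ (.app u w) B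
  | pair : Typed Γ u A → Typed Γ v B → Typed Γ (.pair u v) (.conj A B)
  | projL : Typed Γ u (.conj A B) → Typed Γ (.proj false u) A
  | projR : Typed Γ u (.conj A B) → Typed Γ (.proj true u) B
  | efq : Typed Γ u .bot → Typed Γ (.efq n u) (.atom n)

def IsLam : Tm → Prop
  | .lam _ _ _ => True
  | _ => False

def IsPair : Tm → Prop
  | .pair _ _ => True
  | _ => False

/-- A term is normal if it contains no β-redex and no projection redex. -/
def NormalTm : Tm → Prop
  | .var _ => True
  | .lam _ _ u => NormalTm u
  | .app u w => NormalTm u ∧ NormalTm w ∧ ¬ IsLam u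
  | .pair u v => NormalTm u ∧ NormalTm v
  | .proj _ u => NormalTm u ∧ ¬ IsPair u
  | .efq _ u => NormalTm u

/-- The subterm relation. -/
inductive Subterm : Tm → Tm → Prop
  | refl (t) : Subterm t t
  | lam : Subterm s u → Subterm s (.lam x A u)
  | appL : Subterm s u → Subterm s (.app u w)
  | appR : Subterm s w → Subterm s (.app u w)
  | pairL : Subterm s u → Subterm s (.pair u v)
  | pairR : Subterm s v → Subterm s (.pair u v)
  | proj : Subterm s u → Subterm s (.proj b u)
  | efq : Subterm s u → Subterm s (.efq n u)

/-- Every free occurrence of the variable z in the term is immediately applied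
to an argument or a projection (i.e. occurs as z ξ). -/
def Applied (z : ℕ) : Tm → Prop
  | .var x => x ≠ z
  | .lam x _ u => x = z ∨ Applied z u
  | .app u w => (u = .var z ∨ Applied z u) ∧ Applied z w
  | .pair u v => Applied z u ∧ Applied z v
  | .proj _ u => u = .var z ∨ Applied z u
  | .efq _ u => Applied z u

/-- Size of a formula. -/
def sizeF : Form → ℕ
  | .atom _ => 1
  | .bot => 1
  | .conj a b => sizeF a + sizeF b + 1
  | .imp a b => sizeF a + sizeF b + 1

lemma subform_size {B A : Form} (h : Subform B A) : sizeF B ≤ sizeF A := by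
  induction h with
  | refl => exact le_refl _
  | conjL _ ih => simp [sizeF]; omega
  | conjR _ ih => simp [sizeF]; omega
  | impL _ ih => simp [sizeF]; omega
  | impR _ ih => simp [sizeF]; omega

lemma subform_trans {A B C : Form} (h1 : Subform A B) (h2 : Subform B C) :
    Subform A C := by
  induction h2 with
  | refl => exact h1
  | conjL _ ih => exact Subform.conjL ih
  | conjR _ ih => exact Subform.conjR ih
  | impL _ ih => exact Subform.impL ih
  | impR _ ih => exact Subform.impR ih

lemma ne_of_sizeF {B E : Form} (h : sizeF B < sizeF E) : B ≠ E := by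
  intro he; rw [he] at h; exact lt_irrefl _ h

lemma subform_bot {B : Form} (h : Subform B .bot) : B = .bot := by
  cases h; rfl

/-- Neutral terms: variables, applications, projections. -/
def Neut : Tm → Prop
  | .var _ => True
  | .app _ _ => True
  | .proj _ _ => True
  | _ => False

lemma neut_of_imp {Γ : ℕ → Option Form} {u : Tm} {C A : Form}
    (h : Typed Γ u (.imp C A)) (hl : ¬ IsLam u) : Neut u := by
  cases u with
  | var => trivial
  | app => trivial
  | proj => trivial
  | lam => exact absurd trivial hl
  | pair => cases h
  | efq => cases h

lemma neut_of_conj {Γ : ℕ → Option Form} {u : Tm} {C A : Form}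
    (h : Typed Γ u (.conj C A)) (hp : ¬ IsPair u) : Neut u := by
  cases u with
  | var => trivial
  | app => trivial
  | proj => trivial
  | lam => cases h
  | pair => exact absurd trivial hp
  | efq => cases h

/-- Every normal neutral term has a head variable whose type contains the
type of the term as a subformula (properly, unless the term is a variable). -/
lemma neutral_head {Γ : ℕ → Option Form} {r : Tm} {A : Form}
    (ht : Typed Γ r A) : NormalTm r → Neut r →
    ∃ x E, x ∈ FV r ∧ Γ x = some E ∧ Subform A E ∧
      (r = .var x ∨ sizeF A < sizeF E) := by
  induction ht with
  | @var Γ A x h =>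
      intro _ _
      exact ⟨x, A, rfl, h, Subform.refl A, Or.inl rfl⟩
  | lam _ _ => intro _ h; exact h.elim
  | @app Γ u C A w hu hw ihu _ =>
      intro hnf _
      obtain ⟨hnu, hnw, hnl⟩ := hnf
      obtain ⟨x, E, hxF, hE, hs, _⟩ := ihu hnu (neut_of_imp hu hnl)
      refine ⟨x, E, Set.mem_union_left _ hxF, hE,
        subform_trans (Subform.impR (Subform.refl A)) hs, Or.inr ?_⟩
      have h1 := subform_size hs
      simp [sizeF] at h1 ⊢
      omega
  | pair _ _ _ _ => intro _ h; exact h.elim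
  | @projL Γ u C A hu ihu =>
      intro hnf _
      obtain ⟨hnu, hnp⟩ := hnf
      obtain ⟨x, E, hxF, hE, hs, _⟩ := ihu hnu (neut_of_conj hu hnp)
      refine ⟨x, E, hxF, hE,
        subform_trans (Subform.conjL (Subform.refl C)) hs, Or.inr ?_⟩
      have h1 := subform_size hs
      simp [sizeF] at h1 ⊢
      omega
  | @projR Γ u C A hu ihu =>
      intro hnf _
      obtain ⟨hnu, hnp⟩ := hnf
      obtain ⟨x, E, hxF, hE, hs, _⟩ := ihu hnu (neut_of_conj hu hnp)
      refine ⟨x, E, hxF, hE,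
        subform_trans (Subform.conjR (Subform.refl A)) hs, Or.inr ?_⟩
      have h1 := subform_size hs
      simp [sizeF] at h1 ⊢
      omega
  | efq _ _ => intro _ h; exact h.elim

/-- Head variable property: if t is a normal simply typed λ-term typed in a
context containing z : B, then either every occurrence of z in t is applied to
an argument or projection, or B = ⊥, or B is a subformula of the type A of t,
or B is a proper subformula of the type of another free variable of t. -/
theorem head_variable_property (Γ : ℕ → Option Form) (t : Tm) (A : Form)
    (z : ℕ) (B : Form) (ht : Typed Γ t A) (hz : Γ z = some B) (hnf : NormalTm t) :
    Applied z t ∨ B = .bot ∨ Subform B A ∨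
    (∃ x ∈ FV t, x ≠ z ∧ ∃ D, Γ x = some D ∧ ProperSub B D) := by

  induction t generalizing Γ A with
  | var x =>
      cases ht with
      | var h =>
        by_cases hxz : x = z
        · subst hxz
          rw [hz] at h
          injection h with h
          subst h
          exact Or.inr (Or.inr (Or.inl (Subform.refl B)))
        · exact Or.inl hxz
  | lam x C u ih =>
      cases ht with
      | @lam _ _ _ _ Bd hu =>
        by_cases hxz : x = z
        · exact Or.inl (Or.inl hxz)
        · have hz' : upd Γ x C z = some B := by
            have hzx : z ≠ x := fun h => hxz h.symm
            simp [upd, hzx, hz]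
          rcases ih (upd Γ x C) Bd hu hz' hnf with h | h | h | ⟨y, hy, hyz, D, hD, hP⟩
          · exact Or.inl (Or.inr h)
          · exact Or.inr (Or.inl h)
          · exact Or.inr (Or.inr (Or.inl (Subform.impR h)))
          · by_cases hyx : y = x
            · subst hyx
              have hDC : D = C := by
                simp [upd] at hD; exact hD.symm
              subst hDC
              exact Or.inr (Or.inr (Or.inl (Subform.impL hP.1)))
            · refine Or.inr (Or.inr (Or.inr ⟨y, ⟨hy, by simpa using hyx⟩, hyz, D, ?_, hP⟩))
              simpa [upd, hyx] using hD
  | app u w ihu ihw =>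
      cases ht with
      | @app _ _ C _ _ hu hw =>
        obtain ⟨hnu, hnw, hnl⟩ := hnf
        have hneu : Neut u := neut_of_imp hu hnl
        rcases ihw Γ C hw hz hnw with haw | hb | hsw | ⟨y, hy, hyz, D, hD, hP⟩
        · by_cases huz : u = .var z
          · exact Or.inl ⟨Or.inl huz, haw⟩
          · rcases ihu Γ (.imp C A) hu hz hnu with hau | hb | hsu | ⟨y, hy, hyz, D, hD, hP⟩
            · exact Or.inl ⟨Or.inr hau, haw⟩
            · exact Or.inr (Or.inl hb)
            · obtain ⟨x, E, hxF, hE, hs, hd⟩ := neutral_head hu hnu hneu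
              rcases hd with huv | hlt
              · -- u is a variable x; since u ≠ var z, x ≠ z, so z is applied in u
                have hxz : x ≠ z := fun h => huz (by rw [huv, h])
                have : Applied z u := by rw [huv]; exact hxz
                exact Or.inl ⟨Or.inr this, haw⟩
              · by_cases hxz : x = z
                · subst hxz
                  rw [hz] at hE
                  injection hE with hE
                  subst hE
                  have := subform_size hsu
                  omega
                · refine Or.inr (Or.inr (Or.inr ⟨x, Set.mem_union_left _ hxF, hxz, E, hE,
                    subform_trans hsu hs, ne_of_sizeF ?_⟩))
                  have := subform_size hsu
                  omega
            · exact Or.inr (Or.inr (Or.inr ⟨y, Set.mem_union_left _ hy, hyz, D, hD, hP⟩))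
        · exact Or.inr (Or.inl hb)
        · obtain ⟨x, E, hxF, hE, hs, hd⟩ := neutral_head hu hnu hneu
          have hBE : Subform B E :=
            subform_trans (subform_trans hsw (Subform.impL (Subform.refl C))) hs
          have hlt : sizeF B < sizeF E := by
            have h1 := subform_size hsw
            have h2 := subform_size hs
            simp [sizeF] at h2
            omega
          by_cases hxz : x = z
          · subst hxz
            rw [hz] at hE
            injection hE with hE
            subst hE
            omega
          · exact Or.inr (Or.inr (Or.inr ⟨x, Set.mem_union_left _ hxF, hxz, E, hE,
              hBE, ne_of_sizeF hlt⟩))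
        · exact Or.inr (Or.inr (Or.inr ⟨y, Set.mem_union_right _ hy, hyz, D, hD, hP⟩))
  | pair u v ihu ihv =>
      cases ht with
      | @pair _ _ A1 _ A2 hu hv =>
        rcases ihu Γ A1 hu hz hnf.1 with hau | hb | hs | ⟨y, hy, hyz, D, hD, hP⟩
        · rcases ihv Γ A2 hv hz hnf.2 with hav | hb | hs | ⟨y, hy, hyz, D, hD, hP⟩
          · exact Or.inl ⟨hau, hav⟩
          · exact Or.inr (Or.inl hb)
          · exact Or.inr (Or.inr (Or.inl (Subform.conjR hs)))
          · exact Or.inr (Or.inr (Or.inr ⟨y, Set.mem_union_right _ hy, hyz, D, hD, hP⟩))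
        · exact Or.inr (Or.inl hb)
        · exact Or.inr (Or.inr (Or.inl (Subform.conjL hs)))
        · exact Or.inr (Or.inr (Or.inr ⟨y, Set.mem_union_left _ hy, hyz, D, hD, hP⟩))
  | proj b u ihu =>
      obtain ⟨hnu, hnp⟩ := hnf
      by_cases huz : u = .var z
      · exact Or.inl (Or.inl huz)
      · -- common treatment for both projections
        have key : ∀ A1 A2 : Form, Typed Γ u (.conj A1 A2) → Subform A (.conj A1 A2) →
            Applied z (Tm.proj b u) ∨ B = .bot ∨ Subform B (.conj A1 A2) ∧ sizeF B ≤ sizeF (.conj A1 A2) ∨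
            (∃ x ∈ FV (Tm.proj b u), x ≠ z ∧ ∃ D, Γ x = some D ∧ ProperSub B D) := by
          intro A1 A2 hu _
          rcases ihu Γ (.conj A1 A2) hu hz hnu with hau | hb | hs | ⟨y, hy, hyz, D, hD, hP⟩
          · exact Or.inl (Or.inr hau)
          · exact Or.inr (Or.inl hb)
          · exact Or.inr (Or.inr (Or.inl ⟨hs, subform_size hs⟩))
          · exact Or.inr (Or.inr (Or.inr ⟨y, hy, hyz, D, hD, hP⟩))
        cases ht with
        | @projL _ _ _ A2 hu =>
          rcases key A A2 hu (Subform.conjL (Subform.refl A)) with h | h | ⟨hs, _⟩ | h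
          · exact Or.inl h
          · exact Or.inr (Or.inl h)
          · obtain ⟨x, E, hxF, hE, hsE, hd⟩ := neutral_head hu hnu (neut_of_conj hu hnp)
            have hBE : Subform B E := subform_trans hs hsE
            rcases hd with huv | hlt
            · have hxz : x ≠ z := fun h => huz (by rw [huv, h])
              have : Applied z u := by rw [huv]; exact hxz
              exact Or.inl (Or.inr this)
            · by_cases hxz : x = z
              · subst hxz
                rw [hz] at hE
                injection hE with hE
                subst hE
                have := subform_size hs
                omega
              · refine Or.inr (Or.inr (Or.inr ⟨x, hxF, hxz, E, hE, hBE, ne_of_sizeF ?_⟩))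
                have := subform_size hs
                omega
          · exact Or.inr (Or.inr (Or.inr h))
        | @projR _ _ A1 _ hu =>
          rcases key A1 A hu (Subform.conjR (Subform.refl A)) with h | h | ⟨hs, _⟩ | h
          · exact Or.inl h
          · exact Or.inr (Or.inl h)
          · obtain ⟨x, E, hxF, hE, hsE, hd⟩ := neutral_head hu hnu (neut_of_conj hu hnp)
            have hBE : Subform B E := subform_trans hs hsE
            rcases hd with huv | hlt
            · have hxz : x ≠ z := fun h => huz (by rw [huv, h])
              have : Applied z u := by rw [huv]; exact hxz
              exact Or.inl (Or.inr this)
            · by_cases hxz : x = z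
              · subst hxz
                rw [hz] at hE
                injection hE with hE
                subst hE
                have := subform_size hs
                omega
              · refine Or.inr (Or.inr (Or.inr ⟨x, hxF, hxz, E, hE, hBE, ne_of_sizeF ?_⟩))
                have := subform_size hs
                omega
          · exact Or.inr (Or.inr (Or.inr h))
  | efq n u ihu =>
      cases ht with
      | efq hu =>
        rcases ihu Γ .bot hu hz hnf with h | h | h | ⟨y, hy, hyz, D, hD, hP⟩
        · exact Or.inl h
        · exact Or.inr (Or.inl h)
        · exact Or.inr (Or.inl (subform_bot h))
        · exact Or.inr (Or.inr (Or.inr ⟨y, hy, hyz, D, hD, hP⟩))
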